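/- arXiv:1305.7511 — 3 statements merged into one kernel-verified Lean document; each statement's English description precedes it below -/
import Mathlib

section
/- Let λ₁ ≤ λ₂ ≤ ... ≤ λₙ be positive real numbers with n ≥ 2, satisfying λ₁⋯λₙ = K for a fixed constant K > 0, and suppose λ₂ < λₙ/2. Then −∑_{2 ≤ i < j ≤ n} (λᵢ − λⱼ)² + 2λ₁(∑_{i=2}^n λᵢ) ≤ −(1/4)λₙ² + C λₙ for a constant C depending only on n and K (in particular the expression is bounded above whenever λₙ is bounded below away from 0). -/
open scoped BigOperators

/-- Let `λ₁ ≤ ⋯ ≤ λₙ` be positive reals (`n ≥ 2`) with `λ₁⋯λₙ = K` for a fixed `K > 0`,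
and suppose `λ₂ < λₙ/2`.  Then
`−∑_{2 ≤ i < j ≤ n} (λᵢ − λⱼ)² + 2λ₁(∑_{i=2}^n λᵢ) ≤ −(1/4)λₙ² + C λₙ`
for a constant `C` depending only on `n` and `K`.  (Indices are 0-based below:
`λ 0` is `λ₁` and `λ ⟨n-1,_⟩` is `λₙ`.) -/
theorem stmt_1 (n : ℕ) (hn : 2 ≤ n) (K : ℝ) (hK : 0 < K) :
    ∃ C : ℝ, ∀ lam : Fin n → ℝ, Monotone lam → (∀ i, 0 < lam i) →
      (∏ i, lam i) = K →
      lam ⟨1, by omega⟩ < lam ⟨n - 1, by omega⟩ / 2 →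
      -(∑ i : Fin n, ∑ j : Fin n,
          if 1 ≤ (i : ℕ) ∧ (i : ℕ) < (j : ℕ) then (lam i - lam j) ^ 2 else 0)
        + 2 * lam ⟨0, by omega⟩ * (∑ i : Fin n, if 1 ≤ (i : ℕ) then lam i else 0)
        ≤ -(1 / 4) * (lam ⟨n - 1, by omega⟩) ^ 2 + C * lam ⟨n - 1, by omega⟩ := by
  refine ⟨2 * (n : ℝ) * K ^ ((n : ℝ)⁻¹), ?_⟩
  intro lam hmono hpos hprod hgap
  have h0 : 0 < n := by omega
  have ha1 : 1 < n := by omega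
  have hb : n - 1 < n := by omega
  rcases eq_or_lt_of_le hn with hn2 | hn3
  · -- n = 2 : the gap hypothesis is contradictory
    exfalso
    subst hn2
    have h2 : lam (⟨1, by omega⟩ : Fin 2) < lam ⟨1, by omega⟩ / 2 := hgap
    have := hpos (⟨1, by omega⟩ : Fin 2)
    linarith
  · have hn3' : 3 ≤ n := hn3
    set a : Fin n := ⟨1, ha1⟩ with ha_def
    set b : Fin n := ⟨n - 1, hb⟩ with hb_def
    have hgap' : lam a < lam b / 2 := hgap
    have hpa : 0 < lam a := hpos a
    have hpb : 0 < lam b := hpos b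
    -- the double sum dominates the single term (i,j) = (a,b)
    have hnonneg : ∀ i j : Fin n,
        0 ≤ (if 1 ≤ (i : ℕ) ∧ (i : ℕ) < (j : ℕ) then (lam i - lam j) ^ 2 else 0) := by
      intro i j; split_ifs <;> positivity
    have hD : (lam a - lam b) ^ 2 ≤
        ∑ i : Fin n, ∑ j : Fin n,
          if 1 ≤ (i : ℕ) ∧ (i : ℕ) < (j : ℕ) then (lam i - lam j) ^ 2 else 0 := by
      have hab : ((a : ℕ) < (b : ℕ)) := by simp [ha_def, hb_def]; omega
      have h1 : (lam a - lam b) ^ 2 ≤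
          ∑ j : Fin n, if 1 ≤ (a : ℕ) ∧ (a : ℕ) < (j : ℕ) then (lam a - lam j) ^ 2 else 0 := by
        have := Finset.single_le_sum
          (f := fun j : Fin n => if 1 ≤ (a : ℕ) ∧ (a : ℕ) < (j : ℕ) then (lam a - lam j) ^ 2 else 0)
          (fun j _ => hnonneg a j) (Finset.mem_univ b)
        have this2 : (if 1 ≤ (a : ℕ) ∧ (a : ℕ) < (b : ℕ) then (lam a - lam b) ^ 2 else 0) ≤
            ∑ j : Fin n, if 1 ≤ (a : ℕ) ∧ (a : ℕ) < (j : ℕ) then (lam a - lam j) ^ 2 else 0 := this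
        rwa [if_pos ⟨le_refl 1, hab⟩] at this2
      refine h1.trans ?_
      exact Finset.single_le_sum
        (f := fun i : Fin n => ∑ j : Fin n,
          if 1 ≤ (i : ℕ) ∧ (i : ℕ) < (j : ℕ) then (lam i - lam j) ^ 2 else 0)
        (fun i _ => Finset.sum_nonneg fun j _ => hnonneg i j) (Finset.mem_univ a)
    -- square gap bound
    have hsq : (lam b) ^ 2 / 4 ≤ (lam a - lam b) ^ 2 := by nlinarith
    -- the truncated sum is at most n * lam b
    have hS : (∑ i : Fin n, if 1 ≤ (i : ℕ) then lam i else 0) ≤ (n : ℝ) * lam b := by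
      calc (∑ i : Fin n, if 1 ≤ (i : ℕ) then lam i else 0)
          ≤ ∑ _i : Fin n, lam b := by
            refine Finset.sum_le_sum fun i _ => ?_
            split_ifs
            · exact hmono (Fin.le_def.mpr (by have := i.isLt; simp [hb_def]; omega))
            · exact hpb.le
        _ = (n : ℝ) * lam b := by simp [Finset.sum_const, mul_comm]
    have hS0 : 0 ≤ ∑ i : Fin n, if 1 ≤ (i : ℕ) then lam i else 0 :=
      Finset.sum_nonneg fun i _ => by split_ifs; exacts [(hpos i).le, le_rfl]
    -- λ₁ ≤ K^{1/n}
    have hp0 : 0 < lam ⟨0, h0⟩ := hpos _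
    have hpow : lam ⟨0, h0⟩ ^ n ≤ K := by
      calc lam ⟨0, h0⟩ ^ n = ∏ _i : Fin n, lam ⟨0, h0⟩ := by simp
        _ ≤ ∏ i, lam i := Finset.prod_le_prod (fun _ _ => hp0.le)
            (fun i _ => hmono (Fin.le_def.mpr (by simp)))
        _ = K := hprod
    have hl1 : lam ⟨0, h0⟩ ≤ K ^ ((n : ℝ)⁻¹) := by
      have h0n : (lam ⟨0, h0⟩ ^ n) ^ ((n : ℝ)⁻¹) = lam ⟨0, h0⟩ :=
        Real.pow_rpow_inv_natCast hp0.le (by omega)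
      calc lam ⟨0, h0⟩ = (lam ⟨0, h0⟩ ^ n) ^ ((n : ℝ)⁻¹) := h0n.symm
        _ ≤ K ^ ((n : ℝ)⁻¹) := Real.rpow_le_rpow (by positivity) hpow (by positivity)
    have hKpos : 0 < K ^ ((n : ℝ)⁻¹) := Real.rpow_pos_of_pos hK _
    have hmul : lam ⟨0, h0⟩ * (∑ i : Fin n, if 1 ≤ (i : ℕ) then lam i else 0)
        ≤ K ^ ((n : ℝ)⁻¹) * ((n : ℝ) * lam b) :=
      mul_le_mul hl1 hS hS0 hKpos.le
    show -(∑ i : Fin n, ∑ j : Fin n,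
          if 1 ≤ (i : ℕ) ∧ (i : ℕ) < (j : ℕ) then (lam i - lam j) ^ 2 else 0)
        + 2 * lam ⟨0, h0⟩ * (∑ i : Fin n, if 1 ≤ (i : ℕ) then lam i else 0)
        ≤ -(1 / 4) * (lam b) ^ 2 + 2 * (n : ℝ) * K ^ ((n : ℝ)⁻¹) * lam b
    nlinarith [hD, hsq, hmul]
end

section
/- Let Ω ⊂ ℂⁿ be a bounded domain and u, v : cl(Ω) → ℝ continuous, smooth on Ω, such that P(u) ≥ 0 and P(v) ≥ 0, where P(w) = (1/(n−1))((Δw)β − i∂∂̄w) with β the Euclidean Kähler form. If P(v)ⁿ ≥ P(u)ⁿ on Ω and v ≤ u on ∂Ω, then v ≤ u on Ω. -/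
/-!
Suppose `v > u` somewhere in `Ω`. For small `ε > 0` the function `g = u - v - ε|z|²` is still
smaller at that point than anywhere on `∂Ω`, so it attains its minimum over `cl(Ω)` at an interior
point `p`. There the real Hessian of `g`, hence its complex Hessian `H`, is positive semidefinite,
and so is `P(H) = ((tr H)·I − H)/(n−1)`. Since `P` is linear and `P(|z|²) = I`, this gives
`P(u)(p) = P(v)(p) + P(H) + ε·I`, and as `P(v)(p) ≥ 0`, strict monotonicity of the determinant
yields `det P(u)(p) > det P(v)(p)`, contradicting `P(v)ⁿ ≥ P(u)ⁿ`.
-/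

open scoped BigOperators ComplexOrder

/-- Second derivative of `u` at `z` in the (real) directions `v`, `w`. -/
noncomputable def d2 (n : ℕ) (u : (Fin n → ℂ) → ℝ) (z v w : Fin n → ℂ) : ℝ :=
  fderiv ℝ (fun y => fderiv ℝ u y w) z v

/-- The complex Hessian `∂²u/∂zⁱ∂z̄ʲ`, expressed via real second derivatives:
`∂²u/∂zⁱ∂z̄ʲ = ¼(∂ₓᵢ∂ₓⱼu + ∂ᵧᵢ∂ᵧⱼu) + (i/4)(∂ₓᵢ∂ᵧⱼu − ∂ᵧᵢ∂ₓⱼu)`. -/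
noncomputable def cHess (n : ℕ) (u : (Fin n → ℂ) → ℝ) (z : Fin n → ℂ) (i j : Fin n) : ℂ :=
  (1 / 4 : ℂ) *
    (((d2 n u z (Pi.single i 1) (Pi.single j 1)
        + d2 n u z (Pi.single i Complex.I) (Pi.single j Complex.I) : ℝ) : ℂ)
      + Complex.I * ((d2 n u z (Pi.single i 1) (Pi.single j Complex.I)
        - d2 n u z (Pi.single i Complex.I) (Pi.single j 1) : ℝ) : ℂ))

/-- The matrix of the `(1,1)` form `P(u) = (1/(n−1))((Δu)β − i∂∂̄u)`, i.e.
`(1/(n−1))((∑ₖ u_{kk̄})δᵢⱼ − u_{ij̄})`. -/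
noncomputable def Pmat (n : ℕ) (u : (Fin n → ℂ) → ℝ) (z : Fin n → ℂ) :
    Matrix (Fin n) (Fin n) ℂ :=
  ((n : ℂ) - 1)⁻¹ •
    ((∑ k, cHess n u z k k) • (1 : Matrix (Fin n) (Fin n) ℂ) - Matrix.of (cHess n u z))

namespace Matrix

variable {ι 𝕜 : Type*} [Fintype ι] [DecidableEq ι] [RCLike 𝕜]

lemma IsHermitian.smul_one_add_smul_eq {A : Matrix ι ι 𝕜} (hA : A.IsHermitian) (c a : 𝕜) :
    c • 1 + a • A = Unitary.conjStarAlgAut 𝕜 _ hA.eigenvectorUnitary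
      (diagonal fun i => c + a * hA.eigenvalues i) := by
  conv_lhs => rw [hA.spectral_theorem]
  rw [← map_smul, ← map_one (Unitary.conjStarAlgAut 𝕜 _ hA.eigenvectorUnitary), ← map_smul,
    ← map_add]
  congr 1
  ext i j
  by_cases h : i = j <;> simp [h]

lemma det_conjStarAlgAut (U : unitary (Matrix ι ι 𝕜)) (B : Matrix ι ι 𝕜) :
    (Unitary.conjStarAlgAut 𝕜 _ U B).det = B.det := by
  rw [Unitary.conjStarAlgAut_apply, det_mul, det_mul, mul_right_comm, ← det_mul,
    Unitary.mul_star_self_of_mem U.2, det_one, one_mul]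

lemma PosSemidef.trace_smul_one_sub {A : Matrix ι ι 𝕜} (hA : A.PosSemidef) :
    (A.trace • 1 - A).PosSemidef := by
  rw [sub_eq_add_neg, ← neg_one_smul 𝕜 A, hA.1.smul_one_add_smul_eq,
    Unitary.conjStarAlgAut_apply, IsUnit.posSemidef_star_right_conjugate_iff Unitary.isUnit_coe,
    posSemidef_diagonal_iff]
  intro i
  have hentry : A.trace + -1 * (hA.1.eigenvalues i : 𝕜)
      = ((∑ j, hA.1.eigenvalues j - hA.1.eigenvalues i : ℝ) : 𝕜) := by
    rw [hA.1.trace_eq_sum_eigenvalues]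
    push_cast
    ring
  rw [hentry, RCLike.ofReal_nonneg, sub_nonneg]
  exact Finset.single_le_sum (fun j _ => hA.eigenvalues_nonneg j) (Finset.mem_univ i)

lemma PosSemidef.det_lt_det_add_one [Nonempty ι] {A : Matrix ι ι 𝕜} (hA : A.PosSemidef) :
    A.det < (A + 1).det := by
  have hspec := hA.1.smul_one_add_smul_eq 1 1
  rw [one_smul, one_smul, add_comm] at hspec
  have hprod : ∏ i, ((1 : 𝕜) + 1 * hA.1.eigenvalues i)
      = ((∏ i, (1 + hA.1.eigenvalues i) : ℝ) : 𝕜) := by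
    push_cast
    simp
  rw [hspec, det_conjStarAlgAut, det_diagonal, hA.1.det_eq_prod_eigenvalues, hprod,
    ← RCLike.ofReal_prod, RCLike.ofReal_lt_ofReal]
  have hμ := hA.eigenvalues_nonneg
  by_cases h0 : ∃ i, hA.1.eigenvalues i = 0
  · obtain ⟨i, hi⟩ := h0
    rw [Finset.prod_eq_zero (Finset.mem_univ i) hi]
    exact Finset.prod_pos fun j _ => by linarith [hμ j]
  · push Not at h0
    exact Finset.prod_lt_prod_of_nonempty (fun i _ => (hμ i).lt_of_ne' (h0 i))
      (fun i _ => lt_one_add _) Finset.univ_nonempty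

open scoped MatrixOrder in
/-- Congruence by `√C` reduces this to `det M < det (M + 1)` for `M = C^{-1/2} A C^{-1/2}`. -/
lemma PosSemidef.det_lt_det_add_posDef [Nonempty ι] {A C : Matrix ι ι 𝕜} (hA : A.PosSemidef)
    (hC : C.PosDef) : A.det < (A + C).det := by
  set S := CFC.sqrt C
  have hS : S.IsHermitian := (nonneg_iff_posSemidef.1 (CFC.sqrt_nonneg C)).isHermitian
  have hSS : S * S = C := CFC.sqrt_mul_sqrt_self C hC.posSemidef.nonneg
  have hdetS : 0 < S.det * S.det := by
    rw [← det_mul, hSS]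
    exact hC.det_pos
  have hSunit : IsUnit S.det := isUnit_iff_ne_zero.2 fun h => by simp [h] at hdetS
  set M := S⁻¹ * A * S⁻¹
  have hM : M.PosSemidef := by
    simpa only [hS.inv.eq] using hA.mul_mul_conjTranspose_same S⁻¹
  have hA_eq : A = S * M * S := by
    simp only [M, ← Matrix.mul_assoc, mul_nonsing_inv _ hSunit, Matrix.one_mul]
    rw [Matrix.mul_assoc, nonsing_inv_mul _ hSunit, Matrix.mul_one]
  have hAC_eq : A + C = S * (M + 1) * S := by
    rw [Matrix.mul_add, Matrix.add_mul, Matrix.mul_one, hSS, ← hA_eq]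
  clear_value M
  calc A.det = S.det * S.det * M.det := by rw [hA_eq, det_mul, det_mul]; ring
    _ < S.det * S.det * (M + 1).det := mul_lt_mul_of_pos_left hM.det_lt_det_add_one hdetS
    _ = (A + C).det := by rw [hAC_eq, det_mul, det_mul]; ring

end Matrix

open Filter
open scoped Topology RealInnerProductSpace

lemma IsOpen.exists_isLocalMin_of_lt_frontier {E : Type*} [TopologicalSpace E] {Ω : Set E}
    (hΩ : IsOpen Ω) (hK : IsCompact (closure Ω)) {g : E → ℝ} (hg : ContinuousOn g (closure Ω))
    {z₀ : E} (hz₀ : z₀ ∈ Ω) (hfr : ∀ z ∈ frontier Ω, g z₀ < g z) : ∃ p ∈ Ω, IsLocalMin g p := by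
  obtain ⟨p, hp, hpmin⟩ := hK.exists_isMinOn ⟨z₀, subset_closure hz₀⟩ hg
  have hpΩ : p ∈ Ω := by
    by_contra hpΩ
    have hpfr : p ∈ frontier Ω := by
      rw [hΩ.frontier_eq]
      exact ⟨hp, hpΩ⟩
    exact (hfr p hpfr).not_ge (hpmin (subset_closure hz₀))
  exact ⟨p, hpΩ, (hpmin.on_subset subset_closure).isLocalMin (hΩ.mem_nhds hpΩ)⟩

/-- The second derivative test reads `deriv (deriv f) x < 0 → IsLocalMax f x`, and a point that is
both a local minimum and a local maximum has vanishing second derivative. -/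
lemma IsLocalMin.deriv_deriv_nonneg {f : ℝ → ℝ} {x : ℝ} (h : IsLocalMin f x)
    (hc : ContinuousAt f x) : 0 ≤ deriv (deriv f) x := by
  by_contra! hneg
  have hmax : IsLocalMax f x := isLocalMax_of_deriv_deriv_neg hneg h.deriv_eq_zero hc
  have hconst : f =ᶠ[𝓝 x] fun _ => f x := (h.and hmax).mono fun y hy => le_antisymm hy.2 hy.1
  have hderiv : deriv f =ᶠ[𝓝 x] fun _ => 0 := by
    filter_upwards [hconst.eventuallyEq_nhds] with y hy using hy.deriv_eq.trans (deriv_const y _)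
  rw [hderiv.deriv_eq, deriv_const] at hneg
  exact lt_irrefl _ hneg

section SecondDerivative

variable {E : Type*} [NormedAddCommGroup E] [NormedSpace ℝ E]

lemma ContDiffAt.differentiableAt_fderiv_apply {F : Type*} [NormedAddCommGroup F]
    [NormedSpace ℝ F] {f : E → F} {p : E} (hf : ContDiffAt ℝ 2 f p) (w : E) :
    DifferentiableAt ℝ (fun y => fderiv ℝ f y w) p :=
  ((hf.fderiv_right (m := 1) (by norm_num)).differentiableAt (by simp)).clm_apply
    (differentiableAt_const w)

lemma IsLocalMin.fderiv_fderiv_apply_self_nonneg {f : E → ℝ} {p : E} (hf : ContDiffAt ℝ 2 f p)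
    (h : IsLocalMin f p) (w : E) : 0 ≤ fderiv ℝ (fun y => fderiv ℝ f y w) p w := by
  set L : ℝ → E := fun t => p + t • w
  have hL : ∀ t, HasDerivAt L w t := fun t => by
    simpa only [id, one_smul] using ((hasDerivAt_id t).smul_const w).const_add p
  have hL0 : L 0 = p := by simp [L]
  have hdiff : ∀ᶠ t in 𝓝 0, DifferentiableAt ℝ f (L t) :=
    (hL0 ▸ (hL 0).continuousAt.tendsto : Tendsto L (𝓝 0) (𝓝 p)).eventually
      ((hf.eventually (by simp)).mono fun y hy => hy.differentiableAt (by simp))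
  have hderiv : deriv (f ∘ L) =ᶠ[𝓝 0] fun t => fderiv ℝ f (L t) w :=
    hdiff.mono fun t ht => (ht.hasFDerivAt.comp_hasDerivAt t (hL t)).deriv
  have hderiv2 : HasDerivAt (fun t => fderiv ℝ f (L t) w)
      (fderiv ℝ (fun y => fderiv ℝ f y w) (L 0) w) 0 :=
    (hL0 ▸ hf.differentiableAt_fderiv_apply w).hasFDerivAt.comp_hasDerivAt 0 (hL 0)
  have hmin : IsLocalMin (f ∘ L) 0 := (hL0 ▸ h).comp_continuous (hL 0).continuousAt
  have h2 := hmin.deriv_deriv_nonneg (hdiff.self_of_nhds.continuousAt.comp (hL 0).continuousAt)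
  rwa [hderiv.deriv_eq, hderiv2.deriv, hL0] at h2

end SecondDerivative

lemma Pi.single_eq_re_smul_add_im_smul {ι : Type*} [DecidableEq ι] (i : ι) (c : ℂ) :
    (Pi.single i c : ι → ℂ)
      = c.re • (Pi.single i 1 : ι → ℂ) + c.im • (Pi.single i Complex.I : ι → ℂ) := by
  ext k
  by_cases h : k = i
  · subst h
    simp
  · simp [h]

section Hessian

variable {n : ℕ} {f g : (Fin n → ℂ) → ℝ} {z : Fin n → ℂ}

lemma d2_eq_fderiv_fderiv (hf : ContDiffAt ℝ 2 f z) (v w : Fin n → ℂ) :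
    d2 n f z v w = fderiv ℝ (fderiv ℝ f) z v w := by
  have h : HasFDerivAt (fun y => fderiv ℝ f y w)
      ((ContinuousLinearMap.apply ℝ ℝ w).comp (fderiv ℝ (fderiv ℝ f) z)) z :=
    (ContinuousLinearMap.apply ℝ ℝ w).hasFDerivAt.comp z
      ((hf.fderiv_right (m := 1) (by norm_num)).differentiableAt (by simp)).hasFDerivAt
  rw [d2, h.fderiv]
  rfl

lemma d2_symm (hf : ContDiffAt ℝ 2 f z) (v w : Fin n → ℂ) : d2 n f z v w = d2 n f z w v := by
  rw [d2_eq_fderiv_fderiv hf, d2_eq_fderiv_fderiv hf]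
  exact (hf.isSymmSndFDerivAt (by simp)).eq v w

lemma d2_sub (hf : ContDiffAt ℝ 2 f z) (hg : ContDiffAt ℝ 2 g z) (v w : Fin n → ℂ) :
    d2 n (fun y => f y - g y) z v w = d2 n f z v w - d2 n g z v w := by
  have h : (fun y => fderiv ℝ (fun x => f x - g x) y w)
      =ᶠ[𝓝 z] fun y => fderiv ℝ f y w - fderiv ℝ g y w := by
    filter_upwards [hf.eventually (by simp), hg.eventually (by simp)] with y hfy hgy
    rw [fderiv_fun_sub (hfy.differentiableAt (by simp)) (hgy.differentiableAt (by simp))]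
    rfl
  rw [d2, h.fderiv_eq, fderiv_fun_sub (hf.differentiableAt_fderiv_apply w)
    (hg.differentiableAt_fderiv_apply w)]
  rfl

lemma d2_const_mul (c : ℝ) (hf : ContDiffAt ℝ 2 f z) (v w : Fin n → ℂ) :
    d2 n (fun y => c * f y) z v w = c * d2 n f z v w := by
  have h : (fun y => fderiv ℝ (fun x => c * f x) y w) =ᶠ[𝓝 z] fun y => c * fderiv ℝ f y w := by
    filter_upwards [hf.eventually (by simp)] with y hfy
    rw [fderiv_const_mul (hfy.differentiableAt (by simp))]
    rfl
  rw [d2, h.fderiv_eq, fderiv_const_mul (hf.differentiableAt_fderiv_apply w)]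
  rfl

lemma cHess_sub (hf : ContDiffAt ℝ 2 f z) (hg : ContDiffAt ℝ 2 g z) (i j : Fin n) :
    cHess n (fun y => f y - g y) z i j = cHess n f z i j - cHess n g z i j := by
  simp only [cHess, d2_sub hf hg]
  push_cast
  ring

lemma cHess_const_mul (c : ℝ) (hf : ContDiffAt ℝ 2 f z) (i j : Fin n) :
    cHess n (fun y => c * f y) z i j = c * cHess n f z i j := by
  simp only [cHess, d2_const_mul c hf]
  push_cast
  ring

lemma star_cHess (hf : ContDiffAt ℝ 2 f z) (i j : Fin n) :
    star (cHess n f z j i) = cHess n f z i j := by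
  simp only [cHess, d2_symm hf (Pi.single j _) (Pi.single i _)]
  simp only [star_mul', star_add, Complex.star_def, map_div₀, map_one, map_ofNat,
    Complex.conj_ofReal, Complex.conj_I]
  push_cast
  ring

lemma re_star_mul_cHess_mul (hf : ContDiffAt ℝ 2 f z) (x : Fin n → ℂ) (i j : Fin n) :
    (star (x i) * (cHess n f z i j * x j)).re =
      (d2 n f z (Pi.single i (star (x i))) (Pi.single j (star (x j)))
        + d2 n f z (Pi.single i (Complex.I * star (x i)))
            (Pi.single j (Complex.I * star (x j)))) / 4 := by
  simp only [cHess, d2_eq_fderiv_fderiv hf]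
  rw [Pi.single_eq_re_smul_add_im_smul i (star (x i)),
    Pi.single_eq_re_smul_add_im_smul j (star (x j)),
    Pi.single_eq_re_smul_add_im_smul i (Complex.I * star (x i)),
    Pi.single_eq_re_smul_add_im_smul j (Complex.I * star (x j))]
  simp only [map_add, map_smul, add_apply, smul_apply, smul_eq_mul]
  simp [Complex.mul_re, Complex.mul_im]
  ring

open Matrix in
/-- The Hermitian form of the complex Hessian at `x` is `(D²f(x̄, x̄) + D²f(i x̄, i x̄)) / 4`. -/
lemma cHess_posSemidef (hf : ContDiffAt ℝ 2 f z) (hpos : ∀ w, 0 ≤ d2 n f z w w) :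
    (of (cHess n f z)).PosSemidef := by
  have hH : (of (cHess n f z)).IsHermitian := by
    ext i j
    exact star_cHess hf i j
  refine .of_dotProduct_mulVec_nonneg hH fun x => ?_
  have hre : (star x ⬝ᵥ (of (cHess n f z) *ᵥ x)).re
      = (d2 n f z (star x) (star x) + d2 n f z (Complex.I • star x) (Complex.I • star x)) / 4 := by
    have h1 : star x = ∑ i, Pi.single i (star (x i)) := (Finset.univ_sum_single _).symm
    have h2 : Complex.I • star x = ∑ i, Pi.single i (Complex.I * star (x i)) :=
      (Finset.univ_sum_single _).symm
    conv_rhs => rw [h2, h1]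
    simp only [dotProduct, mulVec, of_apply, Pi.star_apply, Finset.mul_sum,
      Complex.re_sum, re_star_mul_cHess_mul hf, d2_eq_fderiv_fderiv hf, map_sum,
      _root_.sum_apply, ← Finset.sum_div, ← Finset.sum_add_distrib]
    rw [Finset.sum_comm]
  rw [RCLike.nonneg_iff, hH.im_star_dotProduct_mulVec_self x]
  refine ⟨?_, rfl⟩
  have := hpos (star x)
  have := hpos (Complex.I • star x)
  change 0 ≤ (star x ⬝ᵥ (of (cHess n f z) *ᵥ x)).re
  rw [hre]
  positivity

end Hessian

/-- `|z|²`, written out since the norm on `Fin n → ℂ` is the sup norm. -/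
noncomputable def sqNorm (n : ℕ) (z : Fin n → ℂ) : ℝ := ∑ k, ‖z k‖ ^ 2

section SqNorm

variable {n : ℕ}

lemma sqNorm_nonneg (z : Fin n → ℂ) : 0 ≤ sqNorm n z :=
  Finset.sum_nonneg fun _ _ => sq_nonneg _

lemma contDiff_sqNorm : ContDiff ℝ ⊤ (sqNorm n) :=
  ContDiff.sum fun k _ =>
    (ContinuousLinearMap.proj (R := ℝ) (φ := fun _ : Fin n => ℂ) k).contDiff.norm_sq ℝ

lemma fderiv_sqNorm_apply (y w : Fin n → ℂ) :
    fderiv ℝ (sqNorm n) y w = ∑ k, 2 * ⟪w k, y k⟫ := by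
  have h : HasFDerivAt (sqNorm n)
      (∑ k, (2 : ℕ) • (innerSL ℝ (y k)).comp (ContinuousLinearMap.proj k)) y :=
    HasFDerivAt.fun_sum fun k _ =>
      (ContinuousLinearMap.proj (R := ℝ) (φ := fun _ : Fin n => ℂ) k).hasFDerivAt.norm_sq
  simp [h.fderiv, real_inner_comm, mul_add]

lemma d2_sqNorm (z v w : Fin n → ℂ) : d2 n (sqNorm n) z v w = ∑ k, 2 * ⟪w k, v k⟫ := by
  have h : (fun y => fderiv ℝ (sqNorm n) y w) = ⇑(∑ k, (2 : ℝ) •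
      (innerSL ℝ (w k)).comp (ContinuousLinearMap.proj (R := ℝ) (φ := fun _ : Fin n => ℂ) k)) := by
    ext y
    simp [fderiv_sqNorm_apply]
  simp [d2, h, ContinuousLinearMap.fderiv]

lemma d2_sqNorm_single (z : Fin n → ℂ) (i j : Fin n) (a b : ℂ) :
    d2 n (sqNorm n) z (Pi.single i a) (Pi.single j b) = if i = j then 2 * ⟪b, a⟫ else 0 := by
  rw [d2_sqNorm, Finset.sum_eq_single i (fun k _ hk => by simp [Pi.single_eq_of_ne hk]) (by simp)]
  by_cases h : i = j
  · subst h
    simp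
  · simp [h]

lemma cHess_sqNorm (z : Fin n → ℂ) (i j : Fin n) :
    cHess n (sqNorm n) z i j = (1 : Matrix (Fin n) (Fin n) ℂ) i j := by
  by_cases h : i = j
  · subst h
    simp [cHess, d2_sqNorm_single]
    norm_num
  · simp [cHess, d2_sqNorm_single, h]

end SqNorm

section Pmat

variable {n : ℕ} {f g : (Fin n → ℂ) → ℝ} {z : Fin n → ℂ}

lemma Pmat_eq_trace_smul_one_sub (f : (Fin n → ℂ) → ℝ) (z : Fin n → ℂ) :
    Pmat n f z =
      ((n : ℂ) - 1)⁻¹ • ((Matrix.of (cHess n f z)).trace • 1 - Matrix.of (cHess n f z)) :=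
  rfl

lemma Pmat_sub (hf : ContDiffAt ℝ 2 f z) (hg : ContDiffAt ℝ 2 g z) :
    Pmat n (fun y => f y - g y) z = Pmat n f z - Pmat n g z := by
  have h : Matrix.of (cHess n (fun y => f y - g y) z)
      = Matrix.of (cHess n f z) - Matrix.of (cHess n g z) := by
    ext i j
    exact cHess_sub hf hg i j
  simp only [Pmat_eq_trace_smul_one_sub, h, Matrix.trace_sub, sub_smul, ← smul_sub]
  abel_nf

lemma Pmat_const_mul (c : ℝ) (hf : ContDiffAt ℝ 2 f z) :
    Pmat n (fun y => c * f y) z = (c : ℂ) • Pmat n f z := by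
  have h : Matrix.of (cHess n (fun y => c * f y) z) = (c : ℂ) • Matrix.of (cHess n f z) := by
    ext i j
    exact cHess_const_mul c hf i j
  rw [Pmat_eq_trace_smul_one_sub, Pmat_eq_trace_smul_one_sub, h, Matrix.trace_smul, smul_comm,
    smul_assoc, ← smul_sub]

lemma Pmat_sqNorm (hn : n ≠ 1) (z : Fin n → ℂ) : Pmat n (sqNorm n) z = 1 := by
  have h : Matrix.of (cHess n (sqNorm n) z) = 1 := by
    ext i j
    exact cHess_sqNorm z i j
  have hn' : (n : ℂ) - 1 ≠ 0 := sub_ne_zero.2 (by exact_mod_cast hn)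
  have hsub : (n : ℂ) • (1 : Matrix (Fin n) (Fin n) ℂ) - 1 = ((n : ℂ) - 1) • 1 := by
    rw [sub_smul, one_smul]
  rw [Pmat_eq_trace_smul_one_sub, h, Matrix.trace_one, Fintype.card_fin, hsub, smul_smul,
    inv_mul_cancel₀ hn', one_smul]

lemma Pmat_posSemidef (hn : 1 ≤ n) (hH : (Matrix.of (cHess n f z)).PosSemidef) :
    (Pmat n f z).PosSemidef := by
  have hc : (0 : ℂ) ≤ ((n : ℂ) - 1)⁻¹ := by
    have : ((n : ℂ) - 1)⁻¹ = (((n : ℝ) - 1)⁻¹ : ℝ) := by push_cast; rfl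
    rw [this, Complex.zero_le_real, inv_nonneg, sub_nonneg]
    exact_mod_cast hn
  exact hH.trace_smul_one_sub.smul hc

end Pmat

open Matrix in
lemma det_Pmat_lt_of_isLocalMin {n : ℕ} (hn : 2 ≤ n) {u v : (Fin n → ℂ) → ℝ} {p : Fin n → ℂ}
    {ε : ℝ} (hε : 0 < ε) (hu : ContDiffAt ℝ 2 u p) (hv : ContDiffAt ℝ 2 v p)
    (hPv : (Pmat n v p).PosSemidef)
    (hmin : IsLocalMin (fun y => u y - v y - ε * sqNorm n y) p) :
    (Pmat n v p).det.re < (Pmat n u p).det.re := by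
  set g : (Fin n → ℂ) → ℝ := fun y => u y - v y - ε * sqNorm n y with hg_def
  have hq : ContDiffAt ℝ 2 (sqNorm n) p := contDiff_sqNorm.contDiffAt.of_le le_top
  have huv : ContDiffAt ℝ 2 (fun y => u y - v y) p := hu.sub hv
  have hεq : ContDiffAt ℝ 2 (fun y => ε * sqNorm n y) p := contDiffAt_const.mul hq
  have hg : ContDiffAt ℝ 2 g p := huv.sub hεq
  have hPg : (Pmat n g p).PosSemidef :=
    Pmat_posSemidef (by omega) (cHess_posSemidef hg (hmin.fderiv_fderiv_apply_self_nonneg hg))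
  have hPu : Pmat n u p = Pmat n v p + (Pmat n g p + (ε : ℂ) • 1) := by
    rw [hg_def, Pmat_sub huv hεq, Pmat_sub hu hv, Pmat_const_mul ε hq, Pmat_sqNorm (by omega)]
    abel
  have hC : (Pmat n g p + (ε : ℂ) • 1).PosDef :=
    PosDef.posSemidef_add hPg (PosDef.one.smul (by exact_mod_cast hε))
  have : Nonempty (Fin n) := ⟨⟨0, by omega⟩⟩
  rw [hPu]
  exact (Complex.lt_def.1 (hPv.det_lt_det_add_posDef hC)).1

theorem stmt_9_general (n : ℕ) (hn : 2 ≤ n) (Ω : Set (Fin n → ℂ))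
    (hΩopen : IsOpen Ω) (hΩbdd : Bornology.IsBounded Ω)
    (u v : (Fin n → ℂ) → ℝ)
    (hucont : ContinuousOn u (closure Ω)) (hvcont : ContinuousOn v (closure Ω))
    (husm : ContDiffOn ℝ (⊤ : ℕ∞) u Ω) (hvsm : ContDiffOn ℝ (⊤ : ℕ∞) v Ω)
    (hPv : ∀ z ∈ Ω, (Pmat n v z).PosSemidef)
    (hdet : ∀ z ∈ Ω, (Pmat n u z).det.re ≤ (Pmat n v z).det.re)
    (hbdry : ∀ z ∈ frontier Ω, v z ≤ u z) :
    ∀ z ∈ Ω, v z ≤ u z := by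
  intro z₀ hz₀
  by_contra! hlt
  have hK := hΩbdd.isCompact_closure
  obtain ⟨C, hC⟩ := hK.bddAbove_image contDiff_sqNorm.continuous.continuousOn
  obtain ⟨ε, hε, hεC⟩ := exists_pos_mul_lt (sub_pos.2 hlt) C
  have hfr : ∀ z ∈ frontier Ω,
      u z₀ - v z₀ - ε * sqNorm n z₀ < u z - v z - ε * sqNorm n z := fun z hz => by
    have hqz := hC ⟨z, frontier_subset_closure hz, rfl⟩
    nlinarith [hbdry z hz, sqNorm_nonneg z₀]
  obtain ⟨p, hp, hmin⟩ := hΩopen.exists_isLocalMin_of_lt_frontier hK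
    ((hucont.sub hvcont).sub (contDiff_sqNorm.continuous.continuousOn.const_smul ε)) hz₀ hfr
  have hC2 : ∀ w : (Fin n → ℂ) → ℝ, ContDiffOn ℝ (⊤ : ℕ∞) w Ω → ContDiffAt ℝ 2 w p :=
    fun w hw => (hw.contDiffAt (hΩopen.mem_nhds hp)).of_le
      (WithTop.coe_le_coe.2 (le_top : (2 : ℕ∞) ≤ ⊤))
  exact (hdet p hp).not_gt
    (det_Pmat_lt_of_isLocalMin hn hε (hC2 u husm) (hC2 v hvsm) (hPv p hp) hmin)

/-- Comparison principle for `(n−1)`-plurisubharmonic functions: if `Ω ⊂ ℂⁿ` is a bounded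
domain, `u, v` are continuous on `cl(Ω)` and smooth on `Ω` with `P(u) ≥ 0`, `P(v) ≥ 0`,
`P(v)ⁿ ≥ P(u)ⁿ` on `Ω` (i.e. `det P(v) ≥ det P(u)`), and `v ≤ u` on `∂Ω`,
then `v ≤ u` on `Ω`. -/
theorem stmt_9 (n : ℕ) (hn : 2 ≤ n) (Ω : Set (Fin n → ℂ))
    (hΩopen : IsOpen Ω) (hΩbdd : Bornology.IsBounded Ω)
    (u v : (Fin n → ℂ) → ℝ)
    (hucont : ContinuousOn u (closure Ω)) (hvcont : ContinuousOn v (closure Ω))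
    (husm : ContDiffOn ℝ (⊤ : ℕ∞) u Ω) (hvsm : ContDiffOn ℝ (⊤ : ℕ∞) v Ω)
    (hPu : ∀ z ∈ Ω, (Pmat n u z).PosSemidef)
    (hPv : ∀ z ∈ Ω, (Pmat n v z).PosSemidef)
    (hdet : ∀ z ∈ Ω, (Pmat n u z).det.re ≤ (Pmat n v z).det.re)
    (hbdry : ∀ z ∈ frontier Ω, v z ≤ u z) :
    ∀ z ∈ Ω, v z ≤ u z :=
  stmt_9_general n hn Ω hΩopen hΩbdd u v hucont hvcont husm hvsm hPv hdet hbdry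
end

section
/- Let uⱼ be a sequence of continuous maximal (n−1)-PSH functions on ℂⁿ converging locally uniformly to u. Then u is continuous, (n−1)-PSH, and maximal. -/
open scoped BigOperators
open MeasureTheory

/-- Lebesgue measure on `ℂⁿ` with the Euclidean metric (the `PiLp` type synonym does not
carry a `MeasureSpace` instance by default). -/
noncomputable instance (m : ℕ) : MeasureSpace (EuclideanSpace ℂ (Fin m)) :=
  letI : MeasurableSpace (EuclideanSpace ℂ (Fin m)) :=
    MeasurableSpace.comap WithLp.ofLp (inferInstance : MeasurableSpace (Fin m → ℂ))
  ⟨Measure.map (WithLp.toLp 2) (volume : Measure (Fin m → ℂ))⟩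

/-- The sub-mean value property on a set: `f` is dominated by its ball averages, for balls
contained in `S`.  For continuous `f` this characterizes subharmonicity on `S`. -/
def SubMeanOn (m : ℕ) (S : Set (EuclideanSpace ℂ (Fin m)))
    (f : EuclideanSpace ℂ (Fin m) → ℝ) : Prop :=
  ∀ z r, 0 < r → Metric.closedBall z r ⊆ S →
    f z ≤ ⨍ w in Metric.ball z r, f w

/-- A continuous function `u` on `Ω ⊂ ℂⁿ` is `(n−1)`-plurisubharmonic if its restriction
to every affine `(n−1)`-dimensional complex subspace (image of a complex linear isometry
`ℂ^{n-1} → ℂⁿ` translated by `b`) is subharmonic (Harvey–Lawson's characterization). -/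
def NPSHOn (n : ℕ) (Ω : Set (EuclideanSpace ℂ (Fin n)))
    (u : EuclideanSpace ℂ (Fin n) → ℝ) : Prop :=
  ContinuousOn u Ω ∧
    ∀ (A : EuclideanSpace ℂ (Fin (n - 1)) →ₗᵢ[ℂ] EuclideanSpace ℂ (Fin n))
      (b : EuclideanSpace ℂ (Fin n)),
      SubMeanOn (n - 1) ((fun w => A w + b) ⁻¹' Ω) (fun w => u (A w + b))

/-- `u` is maximal: for every relatively compact open `Ω'` and every continuous
`(n−1)`-PSH function `v` on a neighborhood `Ω''` of `cl(Ω')` with `v ≤ u` on `∂Ω'`,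
one has `v ≤ u` on `Ω'`. -/
def MaximalNPSH (n : ℕ) (u : EuclideanSpace ℂ (Fin n) → ℝ) : Prop :=
  ∀ (Ω' Ω'' : Set (EuclideanSpace ℂ (Fin n))), IsOpen Ω' → Bornology.IsBounded Ω' →
    IsOpen Ω'' → closure Ω' ⊆ Ω'' →
    ∀ v : EuclideanSpace ℂ (Fin n) → ℝ, NPSHOn n Ω'' v →
      (∀ z ∈ frontier Ω', v z ≤ u z) → ∀ z ∈ Ω', v z ≤ u z

/-!
The sub-mean value inequality `u_j(z) ≤ ⨍_{B(z,r)} u_j` on each affine slice passes to the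
limit, because uniform convergence on the compact ball `B̄(z,r)` carries over to the ball
averages. For maximality, let `v ≤ f` on `∂Ω'` and `ε > 0`. Once `|u_j - f| < ε/2` on the
compact set `∂Ω' ∪ {z}`, the function `v - ε/2` is a competitor for `u_j`, so
`v(z) - ε/2 ≤ u_j(z) < f(z) + ε/2`.
-/

open Filter Topology Metric Set

instance (m : ℕ) : BorelSpace (EuclideanSpace ℂ (Fin m)) :=
  PiLp.borelSpace 2

instance (m : ℕ) : (volume : Measure (EuclideanSpace ℂ (Fin m))).IsOpenPosMeasure := by
  show (Measure.map (WithLp.toLp 2) (volume : Measure (Fin m → ℂ))).IsOpenPosMeasure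
  exact (PiLp.continuous_toLp 2 _).isOpenPosMeasure_map (WithLp.toLp_surjective 2)

instance (m : ℕ) : IsFiniteMeasureOnCompacts (volume : Measure (EuclideanSpace ℂ (Fin m))) := by
  show IsFiniteMeasureOnCompacts (Measure.map (WithLp.toLp 2) (volume : Measure (Fin m → ℂ)))
  exact Measure.IsFiniteMeasureOnCompacts.map _ (PiLp.homeomorph 2 _).symm

theorem setAverage_sub_const {α E : Type*} [MeasurableSpace α] [NormedAddCommGroup E]
    [NormedSpace ℝ E] [CompleteSpace E] {μ : Measure α} {s : Set α} (hs₀ : μ s ≠ 0)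
    (hs : μ s ≠ ⊤) {g : α → E} (hg : IntegrableOn g s μ) (c : E) :
    ⨍ x in s, (g x - c) ∂μ = (⨍ x in s, g x ∂μ) - c := by
  rw [setAverage_eq, integral_sub hg (integrableOn_const hs), smul_sub, ← setAverage_eq,
    ← setAverage_eq, setAverage_const hs₀ hs]

theorem TendstoUniformlyOn.tendsto_setIntegral_of_continuousOn {α ι E : Type*}
    [TopologicalSpace α] [MeasurableSpace α] [OpensMeasurableSpace α] [NormedAddCommGroup E]
    [NormedSpace ℝ E] [SecondCountableTopologyEither α E]
    {μ : Measure α} [IsFiniteMeasureOnCompacts μ] {l : Filter ι} [l.IsCountablyGenerated]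
    {F : ι → α → E} {f : α → E} {s K : Set α} (hs : MeasurableSet s) (hsK : s ⊆ K)
    (hK : IsCompact K) (hF : ∀ᶠ i in l, ContinuousOn (F i) K)
    (h_lim : TendstoUniformlyOn F f l K) :
    Tendsto (fun i => ∫ x in s, F i x ∂μ) l (𝓝 (∫ x in s, f x ∂μ)) := by
  rcases l.eq_or_neBot with rfl | hl
  · simp
  obtain ⟨C, hC⟩ := hK.bddAbove_image (h_lim.continuousOn hF.frequently).norm
  apply tendsto_integral_filter_of_dominated_convergence (bound := fun _ => C + 1)
  case hF_meas =>
    exact hF.mono fun i hi => (hi.mono hsK).aestronglyMeasurable hs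
  case h_bound =>
    have := uniformContinuous_norm.comp_tendstoUniformlyOn h_lim
      |>.eventually_forall_le (show C < C + 1 by simp) (by simpa [upperBounds] using hC)
    exact this.mono fun i hi => (ae_restrict_iff' hs).2 (.of_forall fun x hx => hi x (hsK hx))
  case bound_integrable =>
    exact integrableOn_const ((measure_mono hsK).trans_lt hK.measure_lt_top).ne
  case h_lim =>
    exact (ae_restrict_iff' hs).2 (.of_forall fun x hx => h_lim.tendsto_at (hsK hx))

section

variable {m : ℕ} {S : Set (EuclideanSpace ℂ (Fin m))} {f : EuclideanSpace ℂ (Fin m) → ℝ}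

theorem SubMeanOn.sub_const (hsub : SubMeanOn m S f) (hf : ContinuousOn f S) (c : ℝ) :
    SubMeanOn m S (fun w => f w - c) := by
  intro z r hr hball
  have hint : IntegrableOn f (ball z r) :=
    ((hf.mono hball).integrableOn_compact (isCompact_closedBall z r)).mono_set
      ball_subset_closedBall
  rw [setAverage_sub_const (measure_ball_pos _ _ hr).ne' measure_ball_lt_top.ne hint]
  exact sub_le_sub_right (hsub z r hr hball) c

theorem SubMeanOn.of_tendstoLocallyUniformlyOn {ι : Type*} {l : Filter ι} [l.NeBot]
    [l.IsCountablyGenerated] {F : ι → EuclideanSpace ℂ (Fin m) → ℝ}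
    (hsub : ∀ i, SubMeanOn m S (F i)) (hcont : ∀ i, ContinuousOn (F i) S)
    (hlim : TendstoLocallyUniformlyOn F f l S) : SubMeanOn m S f := by
  intro z r hr hball
  have hunif : TendstoUniformlyOn F f l (closedBall z r) :=
    (tendstoLocallyUniformlyOn_iff_tendstoUniformlyOn_of_compact (isCompact_closedBall z r)).1
      (hlim.mono hball)
  have hcenter := hunif.tendsto_at (mem_closedBall_self hr.le)
  have havg : Tendsto (fun i => ⨍ w in ball z r, F i w) l (𝓝 (⨍ w in ball z r, f w)) := by
    simp only [setAverage_eq]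
    exact (hunif.tendsto_setIntegral_of_continuousOn measurableSet_ball ball_subset_closedBall
      (isCompact_closedBall z r) (.of_forall fun i => (hcont i).mono hball)).const_smul _
  exact le_of_tendsto_of_tendsto' hcenter havg fun i => hsub i z r hr hball

end

section

variable {n : ℕ} {Ω : Set (EuclideanSpace ℂ (Fin n))} {f : EuclideanSpace ℂ (Fin n) → ℝ}

theorem NPSHOn.sub_const (hf : NPSHOn n Ω f) (c : ℝ) : NPSHOn n Ω (fun w => f w - c) :=
  ⟨hf.1.sub continuousOn_const, fun A b =>
    (hf.2 A b).sub_const (hf.1.comp (A.continuous.add continuous_const).continuousOn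
      (mapsTo_preimage _ _)) c⟩

theorem NPSHOn.of_tendstoLocallyUniformlyOn {ι : Type*} {l : Filter ι} [l.NeBot]
    [l.IsCountablyGenerated] {u : ι → EuclideanSpace ℂ (Fin n) → ℝ}
    (hpsh : ∀ i, NPSHOn n Ω (u i)) (hlim : TendstoLocallyUniformlyOn u f l Ω) :
    NPSHOn n Ω f := by
  refine ⟨hlim.continuousOn (.of_forall fun i => (hpsh i).1), fun A b => ?_⟩
  have hφ : ContinuousOn (fun w => A w + b) ((fun w => A w + b) ⁻¹' Ω) :=
    (A.continuous.add continuous_const).continuousOn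
  exact SubMeanOn.of_tendstoLocallyUniformlyOn (fun i => (hpsh i).2 A b)
    (fun i => (hpsh i).1.comp hφ (mapsTo_preimage _ _))
    (hlim.comp _ (mapsTo_preimage _ _) hφ)

theorem MaximalNPSH.of_tendstoLocallyUniformly {ι : Type*} {l : Filter ι} [l.NeBot]
    {u : ι → EuclideanSpace ℂ (Fin n) → ℝ} (hmax : ∀ i, MaximalNPSH n (u i))
    (hlim : TendstoLocallyUniformly u f l) : MaximalNPSH n f := by
  intro Ω' Ω'' hΩ' hbdd hΩ'' hcl v hv hfront z hz
  refine le_of_forall_pos_le_add fun ε hε => ?_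
  have hK : IsCompact (insert z (frontier Ω')) :=
    (hbdd.isCompact_closure.of_isClosed_subset isClosed_frontier frontier_subset_closure).insert z
  obtain ⟨i, hi⟩ := (tendstoUniformlyOn_iff.1
    (tendstoLocallyUniformly_iff_forall_isCompact.1 hlim _ hK) (ε / 2) (half_pos hε)).exists
  have hclose : ∀ w ∈ insert z (frontier Ω'), |f w - u i w| < ε / 2 := fun w hw => by
    simpa only [Real.dist_eq] using hi w hw
  have hcompetitor : ∀ w ∈ frontier Ω', v w - ε / 2 ≤ u i w := fun w hw => by
    linarith [hfront w hw, (abs_lt.1 (hclose w (mem_insert_of_mem _ hw))).2]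
  have := hmax i Ω' Ω'' hΩ' hbdd hΩ'' hcl _ (hv.sub_const (ε / 2)) hcompetitor z hz
  linarith [(abs_lt.1 (hclose z (mem_insert _ _))).1]

end

theorem stmt_13_general (n : ℕ) (u : ℕ → EuclideanSpace ℂ (Fin n) → ℝ)
    (f : EuclideanSpace ℂ (Fin n) → ℝ)
    (hpsh : ∀ j, NPSHOn n Set.univ (u j))
    (hmax : ∀ j, MaximalNPSH n (u j))
    (hconv : TendstoLocallyUniformly u f Filter.atTop) :
    Continuous f ∧ NPSHOn n Set.univ f ∧ MaximalNPSH n f := by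
  have hf : NPSHOn n univ f :=
    NPSHOn.of_tendstoLocallyUniformlyOn hpsh (tendstoLocallyUniformlyOn_univ.2 hconv)
  exact ⟨continuousOn_univ.1 hf.1, hf, MaximalNPSH.of_tendstoLocallyUniformly hmax hconv⟩

/-- If `uⱼ` is a sequence of continuous maximal `(n−1)`-PSH functions on `ℂⁿ` converging
locally uniformly to `u`, then `u` is continuous, `(n−1)`-PSH and maximal. -/
theorem stmt_13 (n : ℕ) (hn : 2 ≤ n) (u : ℕ → EuclideanSpace ℂ (Fin n) → ℝ)
    (f : EuclideanSpace ℂ (Fin n) → ℝ)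
    (hcont : ∀ j, Continuous (u j))
    (hpsh : ∀ j, NPSHOn n Set.univ (u j))
    (hmax : ∀ j, MaximalNPSH n (u j))
    (hconv : TendstoLocallyUniformly u f Filter.atTop) :
    Continuous f ∧ NPSHOn n Set.univ f ∧ MaximalNPSH n f :=
  stmt_13_general n u f hpsh hmax hconv
end
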